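/- arXiv:1509.03819 — 4 statements merged into one kernel-verified Lean document; each statement's English description precedes it below -/
import Mathlib

section
/- If α : V → 𝒫(V') is a maximal monotone operator on a real Banach space V, then its Fitzpatrick function satisfies f_α(v,v*) ≥ ⟨v*,v⟩ for all (v,v*) ∈ V × V', with equality if and only if v* ∈ α(v). -/
open NormedSpace

/-- The Fitzpatrick function of a multivalued operator `α : V → 𝒫(V')`. -/
noncomputable def fitzpatrick {V : Type*} [NormedAddCommGroup V] [NormedSpace ℝ V]
    (α : V → Set (StrongDual ℝ V)) : V × StrongDual ℝ V → EReal :=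
  fun p => ⨆ q : {q : V × StrongDual ℝ V // q.2 ∈ α q.1},
    ((p.2 q.1.1 + q.1.2 (p.1 - q.1.1) : ℝ) : EReal)

/-! The pairing identity `⟨v' - w', v - w⟩ = ⟨v', v⟩ - (⟨v', w⟩ + ⟨w', v - w⟩)` shows that
`f_α(v, v') ≤ ⟨v', v⟩` says exactly that `(v, v')` is monotonically related to the graph of `α`.
Monotonicity puts the graph in that set and maximality puts nothing else there, while the
graph point `(v, v')` itself contributes `⟨v', v⟩` to the supremum. -/

section Fitzpatrick

variable {V : Type*} [NormedAddCommGroup V] [NormedSpace ℝ V] {α : V → Set (StrongDual ℝ V)}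

theorem le_fitzpatrick {w : V} {w' : StrongDual ℝ V} (hw : w' ∈ α w) (v : V)
    (v' : StrongDual ℝ V) : ((v' w + w' (v - w) : ℝ) : EReal) ≤ fitzpatrick α (v, v') :=
  le_iSup (fun q : {q : V × StrongDual ℝ V // q.2 ∈ α q.1} =>
    ((v' q.1.1 + q.1.2 (v - q.1.1) : ℝ) : EReal)) ⟨(w, w'), hw⟩

theorem coe_apply_self_le_fitzpatrick_of_mem {v : V} {v' : StrongDual ℝ V} (h : v' ∈ α v) :
    ((v' v : ℝ) : EReal) ≤ fitzpatrick α (v, v') := by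
  simpa using le_fitzpatrick h v v'

theorem fitzpatrick_le_coe_apply_self_iff (v : V) (v' : StrongDual ℝ V) :
    fitzpatrick α (v, v') ≤ ((v' v : ℝ) : EReal) ↔
      ∀ w (w' : StrongDual ℝ V), w' ∈ α w → 0 ≤ (v' - w') (v - w) := by
  simp only [fitzpatrick, iSup_le_iff, Subtype.forall, Prod.forall, EReal.coe_le_coe_iff]
  refine forall₂_congr fun w w' => imp_congr_right fun _ => ?_
  simp only [sub_apply, map_sub]
  constructor <;> intro <;> linarith

theorem fitzpatrick_eq_coe_apply_self_of_mem
    (hmono : ∀ v w (v' w' : StrongDual ℝ V), v' ∈ α v → w' ∈ α w → 0 ≤ (v' - w') (v - w))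
    {v : V} {v' : StrongDual ℝ V} (h : v' ∈ α v) :
    fitzpatrick α (v, v') = ((v' v : ℝ) : EReal) :=
  le_antisymm ((fitzpatrick_le_coe_apply_self_iff v v').2 fun w w' hw => hmono v w v' w' h hw)
    (coe_apply_self_le_fitzpatrick_of_mem h)

theorem coe_apply_self_lt_fitzpatrick_of_notMem
    (hmax : ∀ v (v' : StrongDual ℝ V),
      (∀ w (w' : StrongDual ℝ V), w' ∈ α w → 0 ≤ (v' - w') (v - w)) → v' ∈ α v)
    {v : V} {v' : StrongDual ℝ V} (h : v' ∉ α v) :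
    ((v' v : ℝ) : EReal) < fitzpatrick α (v, v') :=
  not_le.1 fun hle => h (hmax v v' ((fitzpatrick_le_coe_apply_self_iff v v').1 hle))

end Fitzpatrick

theorem stmt1_general {V : Type*} [NormedAddCommGroup V] [NormedSpace ℝ V]
    (α : V → Set (StrongDual ℝ V))
    (hmono : ∀ v w (v' w' : StrongDual ℝ V), v' ∈ α v → w' ∈ α w → 0 ≤ (v' - w') (v - w))
    (hmax : ∀ v (v' : StrongDual ℝ V),
      (∀ w (w' : StrongDual ℝ V), w' ∈ α w → 0 ≤ (v' - w') (v - w)) → v' ∈ α v) :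
    ∀ v (v' : StrongDual ℝ V),
      ((v' v : ℝ) : EReal) ≤ fitzpatrick α (v, v') ∧
        (fitzpatrick α (v, v') = ((v' v : ℝ) : EReal) ↔ v' ∈ α v) := by
  intro v v'
  by_cases h : v' ∈ α v
  · have heq := fitzpatrick_eq_coe_apply_self_of_mem hmono h
    exact ⟨heq.ge, iff_of_true heq h⟩
  · have hlt := coe_apply_self_lt_fitzpatrick_of_notMem hmax h
    exact ⟨hlt.le, iff_of_false hlt.ne' h⟩

/-- Fitzpatrick's theorem: for a maximal monotone operator `α`, the Fitzpatrick
function dominates the duality pairing, with equality exactly on the graph of `α`. -/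
theorem stmt1 {V : Type*} [NormedAddCommGroup V] [NormedSpace ℝ V]
    (α : V → Set (StrongDual ℝ V))
    (hproper : ∃ v w, w ∈ α v)
    (hmono : ∀ v w (v' w' : StrongDual ℝ V), v' ∈ α v → w' ∈ α w → 0 ≤ (v' - w') (v - w))
    (hmax : ∀ v (v' : StrongDual ℝ V),
      (∀ w (w' : StrongDual ℝ V), w' ∈ α w → 0 ≤ (v' - w') (v - w)) → v' ∈ α v) :
    ∀ v (v' : StrongDual ℝ V),
      ((v' v : ℝ) : EReal) ≤ fitzpatrick α (v, v') ∧
        (fitzpatrick α (v, v') = ((v' v : ℝ) : EReal) ↔ v' ∈ α v) :=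
  stmt1_general α hmono hmax
end

section
/- Let V, H be Hilbert spaces with V ⊂ H = H' ⊂ V' continuously and densely. For every v ∈ H¹(0,T;V') ∩ L²(0,T;V) and with μ the measure dμ(t) = (T-t)dt, one has ∫₀ᵀ ⟨D_t v, v⟩ dμ(t) = (1/2)∫₀ᵀ ‖v(t)‖²_H dt − (T/2)‖v(0)‖²_H. -/
open NormedSpace MeasureTheory intervalIntegral

/-! The weight `T - t` makes `G t = ½ ‖v t‖²_H (T - t)` vanish at `T`, and
`G' = ⟨D_t v, v⟩ (T - t) - ½ ‖v‖²_H` as soon as `d/dt ‖v‖²_H = 2 ⟨D_t v, v⟩`; the identity is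
the fundamental theorem of calculus for `G`.
The derivative of `‖v‖²_H` is read off the difference quotients: with `J x = ⟪i x, i ·⟫ ∈ V'`,
`‖i x‖² - ‖i y‖² = (J x - J y) (x + y)`, so the slope of `‖v‖²_H` at `t` is the slope of `J ∘ v`
applied to `v τ + v t`, which tends to `w t (2 v t)` by continuity of `v` alone. -/

section HilbertTriple

variable {V H : Type*} [NormedAddCommGroup V] [NormedSpace ℝ V]
  [NormedAddCommGroup H] [InnerProductSpace ℝ H]

theorem norm_sq_sub_norm_sq_eq_innerSL_comp (i : V →L[ℝ] H) (x y : V) :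
    ‖i x‖ ^ 2 - ‖i y‖ ^ 2 =
      ((innerSL ℝ (i x)).comp i - (innerSL ℝ (i y)).comp i) (x + y) := by
  simp only [sub_apply, ContinuousLinearMap.comp_apply, innerSL_apply_apply,
    map_add, real_inner_comm (i y) (i x), real_inner_self_eq_norm_sq]
  ring

theorem hasDerivAt_norm_sq_of_hasDerivAt_innerSL_comp (i : V →L[ℝ] H) {v : ℝ → V}
    {w : StrongDual ℝ V} {t : ℝ} (hv : ContinuousAt v t)
    (hJ : HasDerivAt (fun s => (innerSL ℝ (i (v s))).comp i) w t) :
    HasDerivAt (fun s => ‖i (v s)‖ ^ 2) (2 * w (v t)) t := by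
  set J : ℝ → StrongDual ℝ V := fun s => (innerSL ℝ (i (v s))).comp i
  have hslope_J := hasDerivAt_iff_tendsto_slope.mp hJ
  have hv_add : Filter.Tendsto (fun s => v s + v t) (nhdsWithin t {t}ᶜ) (nhds (v t + v t)) :=
    (hv.tendsto.mono_left nhdsWithin_le_nhds).add tendsto_const_nhds
  have happly : Filter.Tendsto (fun s => slope J t s (v s + v t)) (nhdsWithin t {t}ᶜ)
      (nhds (w (v t + v t))) :=
    (isBoundedBilinearMap_apply.continuous.tendsto (w, v t + v t)).comp
      (hslope_J.prodMk_nhds hv_add)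
  have hslope_eq : (fun s => slope J t s (v s + v t)) = slope (fun s => ‖i (v s)‖ ^ 2) t := by
    ext s
    simp only [slope, vsub_eq_sub, smul_apply, smul_eq_mul, J,
      norm_sq_sub_norm_sq_eq_innerSL_comp]
  rw [hslope_eq, map_add, ← two_mul] at happly
  exact hasDerivAt_iff_tendsto_slope.mpr happly

end HilbertTriple

theorem integral_deriv_mul_sub_eq {f f' : ℝ → ℝ} {a b : ℝ} (hab : a ≤ b)
    (hf : ContinuousOn f (Set.Icc a b)) (hderiv : ∀ t ∈ Set.Ioo a b, HasDerivAt f (f' t) t)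
    (hint' : IntervalIntegrable (fun t => f' t * (b - t)) volume a b)
    (hint : IntervalIntegrable f volume a b) :
    ∫ t in a..b, f' t * (b - t) = (∫ t in a..b, f t) - (b - a) * f a := by
  have hG : ∀ t ∈ Set.Ioo a b,
      HasDerivAt (fun s => f s * (b - s)) (f' t * (b - t) - f t) t := fun t ht =>
    ((hderiv t ht).mul ((hasDerivAt_id t).const_sub b)).congr_deriv (by rw [id]; ring)
  have hFTC := integral_eq_sub_of_hasDerivAt_of_le (f := fun s => f s * (b - s)) hab
    (hf.mul (continuousOn_const.sub continuousOn_id)) hG (hint'.sub hint)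
  rw [integral_sub hint' hint] at hFTC
  simp only [sub_self, mul_zero, zero_sub] at hFTC
  linarith

theorem stmt11_general {V H : Type*} [NormedAddCommGroup V] [NormedSpace ℝ V]
    [NormedAddCommGroup H] [InnerProductSpace ℝ H]
    (i : V →L[ℝ] H)
    (T : ℝ) (hT : 0 < T)
    (v : ℝ → V) (w : ℝ → StrongDual ℝ V)
    (hv_cont : ContinuousOn v (Set.Icc 0 T))
    (hderiv : ∀ t ∈ Set.Icc 0 T,
      HasDerivAt (fun s : ℝ => ((innerSL ℝ (i (v s))).comp i : StrongDual ℝ V)) (w t) t)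
    (hint1 : IntervalIntegrable (fun t => (w t) (v t) * (T - t)) volume 0 T)
    (hint2 : IntervalIntegrable (fun t => ‖i (v t)‖ ^ 2) volume 0 T) :
    ∫ t in (0:ℝ)..T, (w t) (v t) * (T - t)
      = (1 / 2) * (∫ t in (0:ℝ)..T, ‖i (v t)‖ ^ 2) - (T / 2) * ‖i (v 0)‖ ^ 2 := by
  have hnorm_sq : ∀ t ∈ Set.Ioo 0 T,
      HasDerivAt (fun s => ‖i (v s)‖ ^ 2) (2 * (w t) (v t)) t := fun t ht =>
    hasDerivAt_norm_sq_of_hasDerivAt_innerSL_comp i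
      (hv_cont.continuousAt (Icc_mem_nhds ht.1 ht.2)) (hderiv t (Set.Ioo_subset_Icc_self ht))
  have hint1' : IntervalIntegrable (fun t => 2 * (w t) (v t) * (T - t)) volume 0 T := by
    simpa only [mul_assoc] using hint1.const_mul 2
  have hweighted := integral_deriv_mul_sub_eq (f := fun t => ‖i (v t)‖ ^ 2) hT.le
    ((i.continuous.comp_continuousOn hv_cont).norm.pow 2) hnorm_sq hint1' hint2
  simp only [mul_assoc, intervalIntegral.integral_const_mul, sub_zero] at hweighted
  linarith

/-- For `v ∈ H¹(0,T;V') ∩ L²(0,T;V)` in a Hilbert triplet `V ⊂ H = H' ⊂ V'`,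
with the measure `dμ(t) = (T-t)dt`:
`∫₀ᵀ ⟨D_t v, v⟩ (T-t) dt = (1/2)∫₀ᵀ ‖v(t)‖²_H dt − (T/2)‖v(0)‖²_H`.
Here `i : V → H` is the (dense, continuous) injection, and the embedding `H ⊂ V'` is
`h ↦ ⟪h, i ·⟫`, so that `(j ∘ i ∘ v)' = w` expresses `D_t v = w` in `V'`. -/
theorem stmt11 {V H : Type*} [NormedAddCommGroup V] [NormedSpace ℝ V]
    [NormedAddCommGroup H] [InnerProductSpace ℝ H]
    (i : V →L[ℝ] H) (hiinj : Function.Injective i) (hidense : DenseRange i)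
    (T : ℝ) (hT : 0 < T)
    (v : ℝ → V) (w : ℝ → StrongDual ℝ V)
    (hv_cont : ContinuousOn v (Set.Icc 0 T))
    (hderiv : ∀ t ∈ Set.Icc 0 T,
      HasDerivAt (fun s : ℝ => ((innerSL ℝ (i (v s))).comp i : StrongDual ℝ V)) (w t) t)
    (hint1 : IntervalIntegrable (fun t => (w t) (v t) * (T - t)) volume 0 T)
    (hint2 : IntervalIntegrable (fun t => ‖i (v t)‖ ^ 2) volume 0 T) :
    ∫ t in (0:ℝ)..T, (w t) (v t) * (T - t)
      = (1 / 2) * (∫ t in (0:ℝ)..T, ‖i (v t)‖ ^ 2) - (T / 2) * ‖i (v 0)‖ ^ 2 :=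
  stmt11_general i T hT v w hv_cont hderiv hint1 hint2
end

section
/- If α : V → 𝒫(V') is maximal monotone and is represented by g ∈ 𝓕(V), then its pointwise a.e. superposition α̂ on L²(0,T;V) is maximal monotone; in particular g* ∈ 𝓕(V') represents α⁻¹, ∫₀ᵀ g*(·,·) dt represents the superposition of α⁻¹, and since the superposition of α⁻¹ equals (superposition of α)⁻¹, the operator α̂ is maximal monotone. -/
/-!
Monotonicity of the superposition holds pointwise. For maximality, let `(u, w)` be monotonically
related to the whole graph of the superposition. Its values lie in a separable set, so by the
Lindelöf property countably many graph points `pₙ` detect every `t` at which `(u t, w t)` fails to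
be monotonically related to the graph of `α`; outside the measurable set `B` of such `t`, maximality
of `α` puts `(u t, w t)` in the graph. If `B` had positive measure, test against the pair equal to a
violating `pₙ` on the part of `B` where the chosen index is `< N`, a fixed graph point on the rest
of `B`, and `(u, w)` off `B`. It is in `L²` since it takes finitely many values on `B`, and its
pairing with `(u, w)` is strictly negative on `B` up to a tail that vanishes as `N → ∞`.
-/

open MeasureTheory Filter Topology Set TopologicalSpace

theorem TopologicalSpace.IsSeparable.exists_seq_subcover {X : Type*} [PseudoMetricSpace X]
    {K G : Set X} (hK : IsSeparable K) (hG : G.Nonempty) {U : X → Set X}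
    (hU : ∀ q, IsOpen (U q)) :
    ∃ p : ℕ → X, (∀ n, p n ∈ G) ∧ ∀ z ∈ K, ∀ q ∈ G, z ∈ U q → ∃ n, z ∈ U (p n) := by
  have : SeparableSpace K := hK.separableSpace
  have : SecondCountableTopology K := UniformSpace.secondCountable_of_separable K
  obtain ⟨S, hSG, hSc, hS⟩ := isOpen_biUnion_countable G (fun q => ((↑) : K → X) ⁻¹' U q)
    fun q _ => (hU q).preimage continuous_subtype_val
  obtain ⟨q₀, hq₀⟩ := hG
  obtain ⟨p, hp⟩ := (hSc.insert q₀).exists_eq_range (insert_nonempty q₀ S)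
  refine ⟨p, fun n => ?_, fun z hz q hq hzq => ?_⟩
  · have : p n ∈ insert q₀ S := hp ▸ mem_range_self n
    exact this.elim (· ▸ hq₀) (hSG ·)
  · have : (⟨z, hz⟩ : K) ∈ ⋃ q ∈ G, ((↑) : K → X) ⁻¹' U q := mem_biUnion hq hzq
    rw [← hS, mem_iUnion₂] at this
    obtain ⟨q', hq'S, hzq'⟩ := this
    obtain ⟨n, rfl⟩ : q' ∈ range p := hp ▸ mem_insert_of_mem q₀ hq'S
    exact ⟨n, hzq'⟩

theorem exists_measurable_nat_selector {Ω : Type*} [MeasurableSpace Ω] {P : ℕ → Ω → Prop}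
    (hP : ∀ n, MeasurableSet {t | P n t}) :
    ∃ k : Ω → ℕ, Measurable k ∧ ∀ t ∈ ⋃ n, {t | P n t}, P (k t) t := by
  classical
  have hex : ∀ t, ∃ n, P n t ∨ ¬∃ m, P m t := fun t => by
    by_cases h : ∃ m, P m t
    · exact h.imp fun _ => Or.inl
    · exact ⟨0, Or.inr h⟩
  refine ⟨fun t => Nat.find (hex t), measurable_find hex fun n => ?_,
    fun t ht => (Nat.find_spec (hex t)).resolve_right (not_not.2 (mem_iUnion.1 ht))⟩
  convert (hP n).union (MeasurableSet.iUnion hP).compl using 1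
  ext; simp

section Pairing

variable {V : Type*} [NormedAddCommGroup V] [NormedSpace ℝ V]

def pairingDiff (x y : V × StrongDual ℝ V) : ℝ := (x.2 - y.2) (x.1 - y.1)

@[simp]
theorem pairingDiff_self (x : V × StrongDual ℝ V) : pairingDiff x x = 0 := by
  simp [pairingDiff]

theorem abs_pairingDiff_le (x y : V × StrongDual ℝ V) : |pairingDiff x y| ≤ ‖x - y‖ ^ 2 :=
  calc |pairingDiff x y| ≤ ‖(x - y).2‖ * ‖(x - y).1‖ := (x - y).2.le_opNorm (x - y).1
    _ ≤ ‖x - y‖ * ‖x - y‖ := by gcongr; exacts [norm_snd_le _, norm_fst_le _]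
    _ = ‖x - y‖ ^ 2 := (sq _).symm

theorem continuous_pairingDiff :
    Continuous fun x : (V × StrongDual ℝ V) × (V × StrongDual ℝ V) => pairingDiff x.1 x.2 := by
  unfold pairingDiff
  fun_prop

theorem integrable_pairingDiff {Ω : Type*} [MeasurableSpace Ω] {μ : Measure Ω}
    {z q : Ω → V × StrongDual ℝ V} (hz : MemLp z 2 μ) (hq : MemLp q 2 μ) :
    Integrable (fun t => pairingDiff (z t) (q t)) μ :=
  ((memLp_two_iff_integrable_sq_norm (hz.sub hq).1).1 (hz.sub hq)).mono'
    (continuous_pairingDiff.comp_aestronglyMeasurable (hz.1.prodMk hq.1))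
    (ae_of_all _ fun t => abs_pairingDiff_le (z t) (q t))

end Pairing

section Measure

variable {Ω : Type*} [MeasurableSpace Ω] {μ : Measure Ω}

theorem MeasureTheory.MemLp.of_norm_le_norm_add_const [IsFiniteMeasure μ] {E F : Type*}
    [NormedAddCommGroup E] [NormedAddCommGroup F] {p : ENNReal} {f : Ω → E} {g : Ω → F}
    (hf : MemLp f p μ) (hg : AEStronglyMeasurable g μ) (C : ℝ) (hfg : ∀ t, ‖g t‖ ≤ ‖f t‖ + C) :
    MemLp g p μ :=
  (hf.norm.add (memLp_const C)).of_le hg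
    (ae_of_all _ fun t => (hfg t).trans (Real.le_norm_self _))

theorem MeasureTheory.MemLp.ite_mem_ite_lt_seq [IsFiniteMeasure μ] {E : Type*}
    [NormedAddCommGroup E] {p : ENNReal} {z : Ω → E} (hz₂ : MemLp z p μ) (hz : StronglyMeasurable z)
    {B : Set Ω} [DecidablePred (· ∈ B)] (hB : MeasurableSet B) {k : Ω → ℕ} (hk : Measurable k)
    (x : ℕ → E) (x₀ : E) (N : ℕ) :
    MemLp (fun t => if t ∈ B then (if k t < N then x (k t) else x₀) else z t) p μ := by
  have hq : StronglyMeasurable fun t => if t ∈ B then (if k t < N then x (k t) else x₀) else z t :=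
    (StronglyMeasurable.of_discrete.comp_measurable hk).ite (measurableSet_lt hk measurable_const)
      stronglyMeasurable_const |>.ite hB hz
  refine hz₂.of_norm_le_norm_add_const hq.aestronglyMeasurable
    (∑ n ∈ Finset.range N, ‖x n‖ + ‖x₀‖) fun t => ?_
  have hsum : 0 ≤ ∑ n ∈ Finset.range N, ‖x n‖ := Finset.sum_nonneg fun n _ => norm_nonneg (x n)
  have := norm_nonneg (z t)
  have := norm_nonneg x₀
  split_ifs with hB hN
  · linarith [Finset.single_le_sum (fun n _ => norm_nonneg (x n)) (Finset.mem_range.2 hN)]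
  · linarith
  · linarith

theorem integral_neg_of_nonpos_of_neg_on {ψ : Ω → ℝ} (hψ : Integrable ψ μ) (hψ_nonpos : ψ ≤ 0)
    {B : Set Ω} (hμB : μ B ≠ 0) (hψB : ∀ t ∈ B, ψ t < 0) : ∫ t, ψ t ∂μ < 0 := by
  have hpos : 0 < ∫ t, -ψ t ∂μ :=
    (integral_pos_iff_support_of_nonneg (fun t => neg_nonneg.2 (hψ_nonpos t)) hψ.neg).2 <|
      (pos_iff_ne_zero.2 hμB).trans_le (measure_mono fun t ht => neg_ne_zero.2 (hψB t ht).ne)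
  rw [integral_neg] at hpos
  linarith

theorem tendsto_setIntegral_le_atTop_zero {f : Ω → ℝ} (hf : Integrable f μ) {k : Ω → ℕ}
    (hk : Measurable k) : Tendsto (fun N => ∫ t in {t | N ≤ k t}, f t ∂μ) atTop (𝓝 0) := by
  have hempty : ⋂ N, {t | N ≤ k t} = ∅ :=
    eq_empty_of_forall_notMem fun t ht => (mem_iInter.1 ht (k t + 1)).not_gt (Nat.lt_succ_self _)
  have := tendsto_setIntegral_of_antitone (fun N => measurableSet_le measurable_const hk)
    (fun M N hMN t (ht : N ≤ k t) => hMN.trans ht) ⟨0, hf.integrableOn⟩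
  rwa [hempty, Measure.restrict_empty, integral_zero_measure] at this

theorem exists_forall_integral_neg_of_le_indicator [IsFiniteMeasure μ] {B : Set Ω}
    (hB : MeasurableSet B) (hμB : μ B ≠ 0) {φ h : Ω → ℝ} (hφ : Measurable φ)
    (hφB : ∀ t ∈ B, φ t < 0) (hh : Integrable h μ) {k : Ω → ℕ} (hk : Measurable k) :
    ∃ N, ∀ G : Ω → ℝ, Integrable G μ →
      (∀ t, G t ≤ B.indicator (fun t => if k t < N then φ t else h t) t) → ∫ t, G t ∂μ < 0 := by
  -- `G ≤ ψ + 𝟙_{N ≤ k} (|h| + 1)`, where the truncation `ψ ∈ [-1, 0)` on `B` is integrable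
  set ψ : Ω → ℝ := B.indicator fun t => max (φ t) (-1)
  have hψB : ∀ t ∈ B, -1 ≤ ψ t ∧ ψ t < 0 := fun t ht => by
    simp only [ψ, indicator_of_mem ht]
    exact ⟨le_max_right _ _, max_lt (hφB t ht) (by norm_num)⟩
  have hψ_nonpos : ψ ≤ 0 := fun t => by
    by_cases ht : t ∈ B
    exacts [(hψB t ht).2.le, by simp [ψ, ht]]
  have hψ : Integrable ψ μ := by
    refine (integrable_const (1 : ℝ)).mono'
      ((hφ.max measurable_const).indicator hB).aestronglyMeasurable (ae_of_all _ fun t => ?_)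
    rw [Real.norm_eq_abs, abs_le]
    by_cases ht : t ∈ B
    · exact ⟨(hψB t ht).1, (hψB t ht).2.le.trans zero_le_one⟩
    · simp [ψ, ht]
  have hf : Integrable (fun t => |h t| + 1) μ := hh.abs.add (integrable_const 1)
  have hmeas : ∀ N, MeasurableSet {t | N ≤ k t} := fun N => measurableSet_le measurable_const hk
  obtain ⟨N, hN⟩ := ((tendsto_setIntegral_le_atTop_zero hf hk).eventually
    (gt_mem_nhds (neg_pos.2 (integral_neg_of_nonpos_of_neg_on hψ hψ_nonpos hμB
      fun t ht => (hψB t ht).2)))).exists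
  refine ⟨N, fun G hG hGle => ?_⟩
  have hbound : ∀ t, G t ≤ ψ t + {t | N ≤ k t}.indicator (fun t => |h t| + 1) t := fun t => by
    refine (hGle t).trans ?_
    by_cases ht : t ∈ B
    · by_cases hkN : k t < N
      · simp [ψ, ht, hkN]
      · rw [indicator_of_mem ht, if_neg hkN,
          indicator_of_mem (show t ∈ {t | N ≤ k t} from not_lt.1 hkN)]
        linarith [le_abs_self (h t), (hψB t ht).1]
    · simp [ψ, ht, indicator_nonneg fun t _ => add_nonneg (abs_nonneg (h t)) zero_le_one]
  calc ∫ t, G t ∂μ ≤ ∫ t, ψ t + {t | N ≤ k t}.indicator (fun t => |h t| + 1) t ∂μ :=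
        integral_mono hG (hψ.add (hf.indicator (hmeas N))) hbound
    _ = ∫ t, ψ t ∂μ + ∫ t in {t | N ≤ k t}, (|h t| + 1) ∂μ := by
        rw [integral_add hψ (hf.indicator (hmeas N)), integral_indicator (hmeas N)]
    _ < 0 := by linarith

end Measure

section Superposition

variable {V : Type*} [NormedAddCommGroup V] [NormedSpace ℝ V] {α : V → Set (StrongDual ℝ V)}

theorem exists_mem_of_maximal
    (hmax : ∀ v (v' : StrongDual ℝ V),
      (∀ w (w' : StrongDual ℝ V), w' ∈ α w → 0 ≤ (v' - w') (v - w)) → v' ∈ α v) :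
    ∃ x : V × StrongDual ℝ V, x.2 ∈ α x.1 := by
  by_contra! h
  exact h (0, 0) (hmax 0 0 fun w w' hw => absurd hw (h (w, w')))

variable {Ω : Type*} [MeasurableSpace Ω] {μ : Measure Ω}

theorem ae_mem_of_forall_integral_pairingDiff_nonneg [IsFiniteMeasure μ]
    (hmax : ∀ v (v' : StrongDual ℝ V),
      (∀ w (w' : StrongDual ℝ V), w' ∈ α w → 0 ≤ (v' - w') (v - w)) → v' ∈ α v)
    {z : Ω → V × StrongDual ℝ V} (hz : StronglyMeasurable z) (hz₂ : MemLp z 2 μ)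
    (hrel : ∀ q : Ω → V × StrongDual ℝ V, MemLp q 2 μ → (∀ t, (q t).2 ∈ α (q t).1) →
      0 ≤ ∫ t, pairingDiff (z t) (q t) ∂μ) :
    ∀ᵐ t ∂μ, (z t).2 ∈ α (z t).1 := by
  classical
  obtain ⟨x₀, hx₀⟩ := exists_mem_of_maximal hmax
  obtain ⟨p, hpα, hp⟩ := hz.isSeparable_range.exists_seq_subcover
    (G := {x : V × StrongDual ℝ V | x.2 ∈ α x.1}) ⟨x₀, hx₀⟩
    (U := fun q => {x | pairingDiff x q < 0}) fun q =>
      isOpen_lt (continuous_pairingDiff.comp (continuous_id.prodMk continuous_const))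
        continuous_const
  have hpair_meas : ∀ q : Ω → V × StrongDual ℝ V, StronglyMeasurable q →
      Measurable fun t => pairingDiff (z t) (q t) := fun q hq =>
    (continuous_pairingDiff.comp_stronglyMeasurable (hz.prodMk hq)).measurable
  have hS : ∀ n, MeasurableSet {t | pairingDiff (z t) (p n) < 0} := fun n =>
    measurableSet_lt (hpair_meas _ stronglyMeasurable_const) measurable_const
  set B := ⋃ n, {t | pairingDiff (z t) (p n) < 0}
  have hB : MeasurableSet B := MeasurableSet.iUnion hS
  have hmem : ∀ t ∉ B, (z t).2 ∈ α (z t).1 := fun t ht => hmax _ _ fun w w' hw =>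
    not_lt.1 fun hneg => ht (mem_iUnion.2 (hp _ (mem_range_self t) (w, w') hw hneg))
  suffices μ B = 0 by
    filter_upwards [measure_eq_zero_iff_ae_notMem.1 this] with t ht using hmem t ht
  by_contra hμB
  obtain ⟨k, hk, hkB⟩ := exists_measurable_nat_selector
    (P := fun n t => pairingDiff (z t) (p n) < 0) hS
  obtain ⟨N, hN⟩ := exists_forall_integral_neg_of_le_indicator hB hμB
    (φ := fun t => pairingDiff (z t) (p (k t)))
    (hpair_meas _ (StronglyMeasurable.of_discrete.comp_measurable hk)) hkB
    (integrable_pairingDiff hz₂ (memLp_const x₀)) hk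
  set q : Ω → V × StrongDual ℝ V :=
    fun t => if t ∈ B then (if k t < N then p (k t) else x₀) else z t
  have hq₂ : MemLp q 2 μ := hz₂.ite_mem_ite_lt_seq hz hB hk p x₀ N
  have hqα : ∀ t, (q t).2 ∈ α (q t).1 := fun t => by
    simp only [q]
    split_ifs with h₁ h₂ <;> first | exact hpα _ | exact hx₀ | exact hmem t h₁
  refine (hrel q hq₂ hqα).not_gt (hN _ (integrable_pairingDiff hz₂ hq₂) fun t => le_of_eq ?_)
  by_cases ht : t ∈ B
  · by_cases hkN : k t < N <;> simp [q, ht, hkN]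
  · simp [q, ht]

end Superposition

theorem stmt15_general {V : Type*} [NormedAddCommGroup V] [NormedSpace ℝ V]
    (T : ℝ)
    (α : V → Set (StrongDual ℝ V))
    (hmono : ∀ v w (v' w' : StrongDual ℝ V), v' ∈ α v → w' ∈ α w → 0 ≤ (v' - w') (v - w))
    (hmax : ∀ v (v' : StrongDual ℝ V),
      (∀ w (w' : StrongDual ℝ V), w' ∈ α w → 0 ≤ (v' - w') (v - w)) → v' ∈ α v) :
    (∀ (u₁ u₂ : Lp V 2 (volume.restrict (Set.Ioo (0:ℝ) T)))
        (w₁ w₂ : Lp (StrongDual ℝ V) 2 (volume.restrict (Set.Ioo (0:ℝ) T))),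
      (∀ᵐ t ∂(volume.restrict (Set.Ioo (0:ℝ) T)), w₁ t ∈ α (u₁ t)) →
      (∀ᵐ t ∂(volume.restrict (Set.Ioo (0:ℝ) T)), w₂ t ∈ α (u₂ t)) →
      0 ≤ ∫ t, (w₁ t - w₂ t) (u₁ t - u₂ t) ∂(volume.restrict (Set.Ioo (0:ℝ) T))) ∧
    (∀ (u : Lp V 2 (volume.restrict (Set.Ioo (0:ℝ) T)))
        (w : Lp (StrongDual ℝ V) 2 (volume.restrict (Set.Ioo (0:ℝ) T))),
      (∀ (u₂ : Lp V 2 (volume.restrict (Set.Ioo (0:ℝ) T)))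
          (w₂ : Lp (StrongDual ℝ V) 2 (volume.restrict (Set.Ioo (0:ℝ) T))),
        (∀ᵐ t ∂(volume.restrict (Set.Ioo (0:ℝ) T)), w₂ t ∈ α (u₂ t)) →
        0 ≤ ∫ t, (w t - w₂ t) (u t - u₂ t) ∂(volume.restrict (Set.Ioo (0:ℝ) T))) →
      ∀ᵐ t ∂(volume.restrict (Set.Ioo (0:ℝ) T)), w t ∈ α (u t)) := by
  have : IsFiniteMeasure (volume.restrict (Ioo (0 : ℝ) T)) :=
    isFiniteMeasure_restrict.2 measure_Ioo_lt_top.ne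
  refine ⟨fun u₁ u₂ w₁ w₂ h₁ h₂ => integral_nonneg_of_ae ?_, fun u w hw => ?_⟩
  · filter_upwards [h₁, h₂] with t ht₁ ht₂ using hmono _ _ _ _ ht₁ ht₂
  refine ae_mem_of_forall_integral_pairingDiff_nonneg hmax
    ((Lp.stronglyMeasurable u).prodMk (Lp.stronglyMeasurable w))
    (MemLp.of_fst_snd ⟨Lp.memLp u, Lp.memLp w⟩) fun q hq hqα => ?_
  refine (hw hq.fst.toLp hq.snd.toLp ?_).trans_eq (integral_congr_ae ?_)
  · filter_upwards [hq.fst.coeFn_toLp, hq.snd.coeFn_toLp] with t h₁ h₂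
    rw [h₁, h₂]
    exact hqα t
  · filter_upwards [hq.fst.coeFn_toLp, hq.snd.coeFn_toLp] with t h₁ h₂
    simp only [pairingDiff, h₁, h₂]

/-- If `α : V → 𝒫(V')` is maximal monotone and represented by `g ∈ 𝓕(V)`, then its
pointwise a.e. superposition `α̂` on `L²(0,T;V)` is maximal monotone: it is monotone,
and any pair `(u,w)` in monotone relation with the whole graph of `α̂` belongs to the
graph of `α̂`. -/
theorem stmt15 {V : Type*} [NormedAddCommGroup V] [NormedSpace ℝ V]
    (T : ℝ) (hT : 0 < T)
    (α : V → Set (StrongDual ℝ V))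
    (hproper : ∃ v w, w ∈ α v)
    (hmono : ∀ v w (v' w' : StrongDual ℝ V), v' ∈ α v → w' ∈ α w → 0 ≤ (v' - w') (v - w))
    (hmax : ∀ v (v' : StrongDual ℝ V),
      (∀ w (w' : StrongDual ℝ V), w' ∈ α w → 0 ≤ (v' - w') (v - w)) → v' ∈ α v)
    (g : V × StrongDual ℝ V → EReal)
    (hconv : ∀ x y : V × StrongDual ℝ V, ∀ a b : ℝ, 0 ≤ a → 0 ≤ b → a + b = 1 →
      g (a • x + b • y) ≤ (a : EReal) * g x + (b : EReal) * g y)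
    (hlsc : LowerSemicontinuous g)
    (hge : ∀ p : V × StrongDual ℝ V, ((p.2 p.1 : ℝ) : EReal) ≤ g p)
    (hrep : ∀ p : V × StrongDual ℝ V, g p = ((p.2 p.1 : ℝ) : EReal) ↔ p.2 ∈ α p.1) :
    (∀ (u₁ u₂ : Lp V 2 (volume.restrict (Set.Ioo (0:ℝ) T)))
        (w₁ w₂ : Lp (StrongDual ℝ V) 2 (volume.restrict (Set.Ioo (0:ℝ) T))),
      (∀ᵐ t ∂(volume.restrict (Set.Ioo (0:ℝ) T)), w₁ t ∈ α (u₁ t)) →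
      (∀ᵐ t ∂(volume.restrict (Set.Ioo (0:ℝ) T)), w₂ t ∈ α (u₂ t)) →
      0 ≤ ∫ t, (w₁ t - w₂ t) (u₁ t - u₂ t) ∂(volume.restrict (Set.Ioo (0:ℝ) T))) ∧
    (∀ (u : Lp V 2 (volume.restrict (Set.Ioo (0:ℝ) T)))
        (w : Lp (StrongDual ℝ V) 2 (volume.restrict (Set.Ioo (0:ℝ) T))),
      (∀ (u₂ : Lp V 2 (volume.restrict (Set.Ioo (0:ℝ) T)))
          (w₂ : Lp (StrongDual ℝ V) 2 (volume.restrict (Set.Ioo (0:ℝ) T))),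
        (∀ᵐ t ∂(volume.restrict (Set.Ioo (0:ℝ) T)), w₂ t ∈ α (u₂ t)) →
        0 ≤ ∫ t, (w t - w₂ t) (u t - u₂ t) ∂(volume.restrict (Set.Ioo (0:ℝ) T))) →
      ∀ᵐ t ∂(volume.restrict (Set.Ioo (0:ℝ) T)), w t ∈ α (u t)) :=
  stmt15_general T α hmono hmax
end

section
/- Let ψₙ ∈ 𝓕(V) represent operators αₙ, and suppose ψₙ sequentially Γ-converges with respect to the nonlinear weak topology π̃ to ψ, and ψ represents an operator α. If (vₙ, vₙ*) ∈ graph(αₙ) for every n and (vₙ,vₙ*) π̃-converges to (v,v*), then v* ∈ α(v). That is, the Kuratowski upper limit of the graphs of αₙ is contained in the graph of α. -/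
open NormedSpace Filter Topology

/-- `π̃`-convergence of a sequence in `V × V'`: weak convergence of both components
together with convergence of the duality pairing. -/
def PiTildeTendsto {V : Type*} [NormedAddCommGroup V] [NormedSpace ℝ V]
    (p : ℕ → V × StrongDual ℝ V) (q : V × StrongDual ℝ V) : Prop :=
  (∀ f : StrongDual ℝ V, Tendsto (fun n => f (p n).1) atTop (nhds (f q.1))) ∧
  (∀ v : V, Tendsto (fun n => (p n).2 v) atTop (nhds (q.2 v))) ∧
  Tendsto (fun n => (p n).2 (p n).1) atTop (nhds (q.2 q.1))

section Representation

variable {V : Type*} [NormedAddCommGroup V] [NormedSpace ℝ V]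

theorem PiTildeTendsto.tendsto_pairing_ereal {p : ℕ → V × StrongDual ℝ V}
    {q : V × StrongDual ℝ V} (h : PiTildeTendsto p q) :
    Tendsto (fun n => (((p n).2 (p n).1 : ℝ) : EReal)) atTop (𝓝 ((q.2 q.1 : ℝ) : EReal)) :=
  (continuous_coe_real_ereal.tendsto _).comp h.2.2

theorem mem_of_le_pairing_of_represents {ψ : V × StrongDual ℝ V → EReal}
    {α : V → Set (StrongDual ℝ V)}
    (hge : ∀ p : V × StrongDual ℝ V, ((p.2 p.1 : ℝ) : EReal) ≤ ψ p)
    (hrep : ∀ p : V × StrongDual ℝ V, ψ p = ((p.2 p.1 : ℝ) : EReal) ↔ p.2 ∈ α p.1)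
    {p : V × StrongDual ℝ V} (hp : ψ p ≤ ((p.2 p.1 : ℝ) : EReal)) :
    p.2 ∈ α p.1 :=
  (hrep p).1 (le_antisymm hp (hge p))

end Representation

theorem stmt18_general {V : Type*} [NormedAddCommGroup V] [NormedSpace ℝ V]
    (αn : ℕ → V → Set (StrongDual ℝ V)) (α : V → Set (StrongDual ℝ V))
    (ψn : ℕ → V × StrongDual ℝ V → EReal) (ψ : V × StrongDual ℝ V → EReal)
    (hrepn : ∀ n, ∀ p : V × StrongDual ℝ V,
      ψn n p = ((p.2 p.1 : ℝ) : EReal) ↔ p.2 ∈ αn n p.1)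
    (hgeψ : ∀ p : V × StrongDual ℝ V, ((p.2 p.1 : ℝ) : EReal) ≤ ψ p)
    (hrepψ : ∀ p : V × StrongDual ℝ V, ψ p = ((p.2 p.1 : ℝ) : EReal) ↔ p.2 ∈ α p.1)
    (hliminf : ∀ (q : V × StrongDual ℝ V) (p : ℕ → V × StrongDual ℝ V), PiTildeTendsto p q →
      ψ q ≤ Filter.liminf (fun n => ψn n (p n)) atTop)
    (vn : ℕ → V) (vn' : ℕ → StrongDual ℝ V) (v : V) (v' : StrongDual ℝ V)
    (hgraph : ∀ n, vn' n ∈ αn n (vn n))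
    (hconv : PiTildeTendsto (fun n => (vn n, vn' n)) (v, v')) :
    v' ∈ α v := by
  have hψn_eq : ∀ n, ψn n (vn n, vn' n) = ((vn' n (vn n) : ℝ) : EReal) := fun n =>
    (hrepn n (vn n, vn' n)).2 (hgraph n)
  refine mem_of_le_pairing_of_represents (p := (v, v')) hgeψ hrepψ ?_
  calc ψ (v, v') ≤ liminf (fun n => ψn n (vn n, vn' n)) atTop := hliminf _ _ hconv
    _ = liminf (fun n => ((vn' n (vn n) : ℝ) : EReal)) atTop := by simp only [hψn_eq]
    _ = ((v' v : ℝ) : EReal) := hconv.tendsto_pairing_ereal.liminf_eq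

/-- Kuratowski upper-limit of graphs: if `ψₙ` represents `αₙ`, `ψₙ` Γ-converges to `ψ`
with respect to `π̃`, `ψ` represents `α`, `(vₙ,vₙ*) ∈ graph(αₙ)` and
`(vₙ,vₙ*) π̃-converges to (v,v*)`, then `v* ∈ α(v)`. -/
theorem stmt18 {V : Type*} [NormedAddCommGroup V] [NormedSpace ℝ V]
    [TopologicalSpace.SeparableSpace V]
    (αn : ℕ → V → Set (StrongDual ℝ V)) (α : V → Set (StrongDual ℝ V))
    (ψn : ℕ → V × StrongDual ℝ V → EReal) (ψ : V × StrongDual ℝ V → EReal)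
    (hFn : ∀ n, (∀ x y : V × StrongDual ℝ V, ∀ a b : ℝ, 0 ≤ a → 0 ≤ b → a + b = 1 →
        ψn n (a • x + b • y) ≤ (a : EReal) * ψn n x + (b : EReal) * ψn n y) ∧
      LowerSemicontinuous (ψn n) ∧
      (∀ p : V × StrongDual ℝ V, ((p.2 p.1 : ℝ) : EReal) ≤ ψn n p))
    (hrepn : ∀ n, ∀ p : V × StrongDual ℝ V,
      ψn n p = ((p.2 p.1 : ℝ) : EReal) ↔ p.2 ∈ αn n p.1)
    (hgeψ : ∀ p : V × StrongDual ℝ V, ((p.2 p.1 : ℝ) : EReal) ≤ ψ p)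
    (hrepψ : ∀ p : V × StrongDual ℝ V, ψ p = ((p.2 p.1 : ℝ) : EReal) ↔ p.2 ∈ α p.1)
    (hliminf : ∀ (q : V × StrongDual ℝ V) (p : ℕ → V × StrongDual ℝ V), PiTildeTendsto p q →
      ψ q ≤ Filter.liminf (fun n => ψn n (p n)) atTop)
    (hrecovery : ∀ q : V × StrongDual ℝ V, ∃ p : ℕ → V × StrongDual ℝ V, PiTildeTendsto p q ∧
      Tendsto (fun n => ψn n (p n)) atTop (nhds (ψ q)))
    (vn : ℕ → V) (vn' : ℕ → StrongDual ℝ V) (v : V) (v' : StrongDual ℝ V)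
    (hgraph : ∀ n, vn' n ∈ αn n (vn n))
    (hconv : PiTildeTendsto (fun n => (vn n, vn' n)) (v, v')) :
    v' ∈ α v :=
  stmt18_general αn α ψn ψ hrepn hgeψ hrepψ hliminf vn vn' v v' hgraph hconv
end
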